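/- Let $A = \sum_{j=1}^m y_j A_j$ where each $A_j$ is an $n$-qubit operator and $y_j > 0$. Suppose each $U_j$ is a unitary satisfying $\|A_j/\alpha_j - (\langle 0|^{\otimes a} \otimes I) U_j (|0\rangle^{\otimes a} \otimes I)\| \le \epsilon$ for some $\alpha_j > 0$. Let $B$ be a $b$-qubit unitary with $B|0\rangle = \sum_{j} \sqrt{\alpha_j y_j / s} |j\rangle$ where $s = \sum_j y_j \alpha_j$, and define $W = \sum_{j} |j\rangle\langle j| \otimes U_j + (I - \sum_j |j\rangle\langle j|) \otimes I$ and $\widetilde{W} = (B^\dagger \otimes I) W (B \otimes I)$. Then $\|A - s (\langle 0|^{\otimes b} \langle 0|^{\otimes a} \otimes I) \widetilde{W} (|0\rangle^{\otimes b} |0\rangle^{\otimes a} \otimes I)\| \le s \epsilon$, i.e., $\widetilde{W}$ is an $(s, a+b, s\epsilon)$-block-encoding of $A$. -/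

import Mathlib

/-!
Conjugating the select operator `W` by `B ⊗ I` and projecting the first register onto `|0⟩`
gives `∑ⱼ |⟨j|B|0⟩|² Uⱼ = ∑ⱼ (αⱼyⱼ/s) Uⱼ`: `B|0⟩` lives on the control states `|j⟩`, on which
`W` acts as `Uⱼ`. Projecting the second register onto `|0⟩` as well, `A` minus `s` times the
result is `∑ⱼ yⱼαⱼ (Aⱼ/αⱼ - ⟨0|Uⱼ|0⟩)`, whose norm is at most `∑ⱼ yⱼαⱼ ε = s ε`.
-/

open Matrix
open scoped Kronecker

noncomputable section

/-- The spectral (ℓ²-operator) norm of a square complex matrix. -/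
def specNorm {n : Type*} [Fintype n] [DecidableEq n] (A : Matrix n n ℂ) : ℝ :=
  ‖Matrix.toEuclideanCLM (𝕜 := ℂ) A‖

namespace Matrix

variable {R ι κ J : Type*} [CommRing R] [StarRing R] [Fintype ι] [Fintype κ] [DecidableEq κ]

def compressBlock (B : Matrix ι ι R) (i : ι) :
    Matrix (ι × κ) (ι × κ) R →ₗ[R] Matrix κ κ R where
  toFun M := ((Bᴴ ⊗ₖ 1) * M * (B ⊗ₖ 1)).submatrix (Prod.mk i) (Prod.mk i)
  map_add' M N := by rw [Matrix.mul_add, Matrix.add_mul]; rfl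
  map_smul' c M := by rw [Matrix.mul_smul, Matrix.smul_mul]; rfl

theorem compressBlock_kronecker (B : Matrix ι ι R) (i : ι) (P : Matrix ι ι R) (V : Matrix κ κ R) :
    compressBlock B i (P ⊗ₖ V) = (Bᴴ * P * B) i i • V := by
  ext x y
  simp [compressBlock, ← mul_kronecker_mul]

variable [DecidableEq ι] [Fintype J]

theorem conjTranspose_mul_single_mul_apply (B : Matrix ι ι R) (l i i' : ι) :
    (Bᴴ * single l l (1 : R) * B : Matrix ι ι R) i i' = star (B l i) * B l i' := by
  simp [mul_apply, single_apply, ite_and]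

def selectOp (k : J → ι) (U : J → Matrix κ κ R) : Matrix (ι × κ) (ι × κ) R :=
  ∑ j, single (k j) (k j) 1 ⊗ₖ U j + (1 - ∑ j, single (k j) (k j) 1) ⊗ₖ 1

theorem compressBlock_selectOp {k : J → ι} (hk : Function.Injective k)
    (U : J → Matrix κ κ R) (B : Matrix ι ι R) (i : ι)
    (hB : ∀ l, (∀ j, k j ≠ l) → B l i = 0) :
    compressBlock B i (selectOp k U) = ∑ j, (star (B (k j) i) * B (k j) i) • U j := by
  -- `B` has no weight outside the control states `k j`, so the identity branch drops out.
  have hidle : (Bᴴ * (1 - ∑ j, single (k j) (k j) (1 : R)) * B : Matrix ι ι R) i i = 0 := by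
    rw [Matrix.mul_sub, Matrix.sub_mul, Matrix.mul_one, Finset.mul_sum, Finset.sum_mul, sub_apply,
      sum_apply, sub_eq_zero, mul_apply]
    simp only [conjTranspose_mul_single_mul_apply, conjTranspose_apply]
    exact (Fintype.sum_of_injective k hk _ _
      (fun l hl => by rw [hB l (by simpa using hl), mul_zero]) fun _ => rfl).symm
  simp only [selectOp, map_add, map_sum, compressBlock_kronecker, hidle, zero_smul, add_zero,
    conjTranspose_mul_single_mul_apply]

end Matrix

theorem norm_sum_smul_sub_smul_sum_le {𝕜 E J : Type*} [RCLike 𝕜] [SeminormedAddCommGroup E]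
    [NormedSpace 𝕜 E] [Fintype J] {y α : J → ℝ} (hy : ∀ j, 0 ≤ y j) (hα : ∀ j, 0 < α j)
    {s ε : ℝ} (hs : s = ∑ j, y j * α j) {A M : J → E}
    (hM : ∀ j, ‖(((α j)⁻¹ : ℝ) : 𝕜) • A j - M j‖ ≤ ε) :
    ‖∑ j, (y j : 𝕜) • A j - (s : 𝕜) • ∑ j, ((α j * y j / s : ℝ) : 𝕜) • M j‖ ≤ s * ε := by
  have hterm : ∀ j, (y j : 𝕜) • A j - (s : 𝕜) • ((α j * y j / s : ℝ) : 𝕜) • M j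
      = ((y j * α j : ℝ) : 𝕜) • ((((α j)⁻¹ : ℝ) : 𝕜) • A j - M j) := by
    intro j
    have hcoef : s * (α j * y j / s) = y j * α j := by
      rcases eq_or_ne s 0 with hs0 | hs0
      · have hterm_le : y j * α j ≤ s :=
          hs ▸ Finset.single_le_sum (fun i _ => mul_nonneg (hy i) (hα i).le) (Finset.mem_univ j)
        rw [hs0, zero_mul, le_antisymm (hs0 ▸ hterm_le) (mul_nonneg (hy j) (hα j).le)]
      · field_simp
    rw [smul_sub, smul_smul, smul_smul, ← RCLike.ofReal_mul, ← RCLike.ofReal_mul, hcoef,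
      mul_inv_cancel_right₀ (hα j).ne']
  calc ‖∑ j, (y j : 𝕜) • A j - (s : 𝕜) • ∑ j, ((α j * y j / s : ℝ) : 𝕜) • M j‖
      = ‖∑ j, ((y j * α j : ℝ) : 𝕜) • ((((α j)⁻¹ : ℝ) : 𝕜) • A j - M j)‖ := by
        simp only [Finset.smul_sum, ← Finset.sum_sub_distrib, hterm]
    _ ≤ ∑ j, y j * α j * ε := by
        refine (norm_sum_le _ _).trans (Finset.sum_le_sum fun j _ => ?_)
        rw [norm_smul, RCLike.norm_ofReal, abs_of_nonneg (mul_nonneg (hy j) (hα j).le)]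
        exact mul_le_mul_of_nonneg_left (hM j) (mul_nonneg (hy j) (hα j).le)
    _ = s * ε := by rw [← Finset.sum_mul, hs]

open scoped Matrix.Norms.L2Operator

theorem sum_block_encoding_general {n a b m : ℕ} (hm : m ≤ 2 ^ b)
    (y α : Fin m → ℝ) (hy : ∀ j, 0 < y j) (hα : ∀ j, 0 < α j) (ε : ℝ)
    (A : Fin m → Matrix (Fin (2 ^ n)) (Fin (2 ^ n)) ℂ)
    (U : Fin m → Matrix (Fin (2 ^ a) × Fin (2 ^ n)) (Fin (2 ^ a) × Fin (2 ^ n)) ℂ)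
    (hbe : ∀ j, specNorm ((((α j)⁻¹ : ℝ) : ℂ) • A j -
      Matrix.of fun p q : Fin (2 ^ n) =>
        U j (⟨0, Nat.two_pow_pos a⟩, p) (⟨0, Nat.two_pow_pos a⟩, q)) ≤ ε)
    (s : ℝ) (hs : s = ∑ j, y j * α j)
    (B : Matrix (Fin (2 ^ b)) (Fin (2 ^ b)) ℂ)
    (hB0 : ∀ j : Fin m,
      B (Fin.castLE hm j) ⟨0, Nat.two_pow_pos b⟩ = (Real.sqrt (α j * y j / s) : ℂ))
    (hB0' : ∀ i : Fin (2 ^ b), (∀ j : Fin m, Fin.castLE hm j ≠ i) →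
      B i ⟨0, Nat.two_pow_pos b⟩ = 0)
    (W : Matrix (Fin (2 ^ b) × Fin (2 ^ a) × Fin (2 ^ n))
      (Fin (2 ^ b) × Fin (2 ^ a) × Fin (2 ^ n)) ℂ)
    (hW : W = (∑ j : Fin m,
        (Matrix.single (Fin.castLE hm j) (Fin.castLE hm j) (1 : ℂ)) ⊗ₖ U j) +
      ((1 : Matrix (Fin (2 ^ b)) (Fin (2 ^ b)) ℂ) -
        ∑ j : Fin m, Matrix.single (Fin.castLE hm j) (Fin.castLE hm j) (1 : ℂ)) ⊗ₖ
        (1 : Matrix (Fin (2 ^ a) × Fin (2 ^ n)) (Fin (2 ^ a) × Fin (2 ^ n)) ℂ))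
    (Wt : Matrix (Fin (2 ^ b) × Fin (2 ^ a) × Fin (2 ^ n))
      (Fin (2 ^ b) × Fin (2 ^ a) × Fin (2 ^ n)) ℂ)
    (hWt : Wt = (Bᴴ ⊗ₖ (1 : Matrix (Fin (2 ^ a) × Fin (2 ^ n)) (Fin (2 ^ a) × Fin (2 ^ n)) ℂ))
      * W * (B ⊗ₖ (1 : Matrix (Fin (2 ^ a) × Fin (2 ^ n)) (Fin (2 ^ a) × Fin (2 ^ n)) ℂ))) :
    specNorm ((∑ j, ((y j : ℝ) : ℂ) • A j) - (s : ℂ) •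
      Matrix.of fun p q : Fin (2 ^ n) =>
        Wt (⟨0, Nat.two_pow_pos b⟩, ⟨0, Nat.two_pow_pos a⟩, p)
           (⟨0, Nat.two_pow_pos b⟩, ⟨0, Nat.two_pow_pos a⟩, q)) ≤ s * ε := by
  set i0 : Fin (2 ^ b) := ⟨0, Nat.two_pow_pos b⟩
  set a0 : Fin (2 ^ a) := ⟨0, Nat.two_pow_pos a⟩
  have hs0 : 0 ≤ s := hs ▸ Finset.sum_nonneg fun j _ => (mul_pos (hy j) (hα j)).le
  have hweight : ∀ j, star (B (Fin.castLE hm j) i0) * B (Fin.castLE hm j) i0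
      = ((α j * y j / s : ℝ) : ℂ) := fun j => by
    rw [hB0 j, Complex.star_def, Complex.conj_ofReal, ← Complex.ofReal_mul,
      Real.mul_self_sqrt (div_nonneg (mul_pos (hα j) (hy j)).le hs0)]
  have hcompress : compressBlock B i0 W = ∑ j, ((α j * y j / s : ℝ) : ℂ) • U j := by
    rw [hW]
    simp only [← hweight]
    exact compressBlock_selectOp (Fin.castLE_injective hm) U B i0 hB0'
  have hblock : (Matrix.of fun p q : Fin (2 ^ n) => Wt (i0, a0, p) (i0, a0, q))
      = ∑ j, ((α j * y j / s : ℝ) : ℂ) • Matrix.of fun p q => U j (a0, p) (a0, q) := by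
    ext p q
    have h := congr_fun₂ hcompress (a0, p) (a0, q)
    simp only [Matrix.sum_apply, Matrix.smul_apply, of_apply] at h ⊢
    rw [hWt]
    exact h
  rw [hblock, specNorm, ← cstar_norm_def]
  exact norm_sum_smul_sub_smul_sum_le (fun j => (hy j).le) hα hs hbe

/-- Linear combination of block-encodings (generalized Lemma 52 of GSLW19):
given `(αⱼ, a, ε)`-block-encodings `Uⱼ` of `Aⱼ`, a state-preparation unitary `B` with
`B|0⟩ = ∑ⱼ √(αⱼyⱼ/s)|j⟩` where `s = ∑ⱼ yⱼαⱼ`, the unitary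
`W̃ = (B† ⊗ I) W (B ⊗ I)` with `W = ∑ⱼ |j⟩⟨j| ⊗ Uⱼ + (I - ∑ⱼ|j⟩⟨j|) ⊗ I`
is an `(s, a+b, sε)`-block-encoding of `A = ∑ⱼ yⱼ Aⱼ`. -/
theorem sum_block_encoding {n a b m : ℕ} (hm : m ≤ 2 ^ b)
    (y α : Fin m → ℝ) (hy : ∀ j, 0 < y j) (hα : ∀ j, 0 < α j) (ε : ℝ)
    (A : Fin m → Matrix (Fin (2 ^ n)) (Fin (2 ^ n)) ℂ)
    (U : Fin m → Matrix (Fin (2 ^ a) × Fin (2 ^ n)) (Fin (2 ^ a) × Fin (2 ^ n)) ℂ)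
    (hU : ∀ j, U j ∈ Matrix.unitaryGroup (Fin (2 ^ a) × Fin (2 ^ n)) ℂ)
    (hbe : ∀ j, specNorm ((((α j)⁻¹ : ℝ) : ℂ) • A j -
      Matrix.of fun p q : Fin (2 ^ n) =>
        U j (⟨0, Nat.two_pow_pos a⟩, p) (⟨0, Nat.two_pow_pos a⟩, q)) ≤ ε)
    (s : ℝ) (hs : s = ∑ j, y j * α j)
    (B : Matrix (Fin (2 ^ b)) (Fin (2 ^ b)) ℂ)
    (hB : B ∈ Matrix.unitaryGroup (Fin (2 ^ b)) ℂ)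
    (hB0 : ∀ j : Fin m,
      B (Fin.castLE hm j) ⟨0, Nat.two_pow_pos b⟩ = (Real.sqrt (α j * y j / s) : ℂ))
    (hB0' : ∀ i : Fin (2 ^ b), (∀ j : Fin m, Fin.castLE hm j ≠ i) →
      B i ⟨0, Nat.two_pow_pos b⟩ = 0)
    (W : Matrix (Fin (2 ^ b) × Fin (2 ^ a) × Fin (2 ^ n))
      (Fin (2 ^ b) × Fin (2 ^ a) × Fin (2 ^ n)) ℂ)
    (hW : W = (∑ j : Fin m,
        (Matrix.single (Fin.castLE hm j) (Fin.castLE hm j) (1 : ℂ)) ⊗ₖ U j) +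
      ((1 : Matrix (Fin (2 ^ b)) (Fin (2 ^ b)) ℂ) -
        ∑ j : Fin m, Matrix.single (Fin.castLE hm j) (Fin.castLE hm j) (1 : ℂ)) ⊗ₖ
        (1 : Matrix (Fin (2 ^ a) × Fin (2 ^ n)) (Fin (2 ^ a) × Fin (2 ^ n)) ℂ))
    (Wt : Matrix (Fin (2 ^ b) × Fin (2 ^ a) × Fin (2 ^ n))
      (Fin (2 ^ b) × Fin (2 ^ a) × Fin (2 ^ n)) ℂ)
    (hWt : Wt = (Bᴴ ⊗ₖ (1 : Matrix (Fin (2 ^ a) × Fin (2 ^ n)) (Fin (2 ^ a) × Fin (2 ^ n)) ℂ))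
      * W * (B ⊗ₖ (1 : Matrix (Fin (2 ^ a) × Fin (2 ^ n)) (Fin (2 ^ a) × Fin (2 ^ n)) ℂ))) :
    specNorm ((∑ j, ((y j : ℝ) : ℂ) • A j) - (s : ℂ) •
      Matrix.of fun p q : Fin (2 ^ n) =>
        Wt (⟨0, Nat.two_pow_pos b⟩, ⟨0, Nat.two_pow_pos a⟩, p)
           (⟨0, Nat.two_pow_pos b⟩, ⟨0, Nat.two_pow_pos a⟩, q)) ≤ s * ε :=
  sum_block_encoding_general hm y α hy hα ε A U hbe s hs B hB0 hB0' W hW Wt hWt
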